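/- For every n ≥ 1 and t < 0, the Hankel determinant D_n satisfies t·(d/dt) ln D_n(t) = n(n+α+β+γ) − Σ_{j=0}^{n−1} R_j(t). -/

import Mathlib

/-!
Conjugating the Hankel matrix by the (unitriangular) coefficient matrix of the monic orthogonal
polynomials at the fixed parameter `t` turns it into `diag(h_0, …, h_{n-1})`, so by Jacobi's formula
`d/dt log D_n(t) = Σ_j (1/h_j) ∫ P_j² ∂_t w`. Since `t ∂_t w = γ w - γ x w / (x - t)`, each summand
is evaluated by integrating `(x w P_j²)'` over `[0, 1]`: the boundary terms vanish, the term with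
`x P_j P_j'` contributes `2 j h_j` by orthogonality, and the term with `x w / (1 - x)` contributes
`R_j h_j - β h_j`. Summing `α + β + γ + 1 + 2j - R_j` over `j < n` gives the claim.
-/

open MeasureTheory Real

/-- The generalized Jacobi weight `w(x;t) = (x-t)^γ x^α (1-x)^β`. -/
noncomputable def genJacobiWeight (α β γ t x : ℝ) : ℝ :=
  (x - t) ^ γ * x ^ α * (1 - x) ^ β

/-- The Hankel determinant `D_n(t)` of the moments of the generalized Jacobi weight. -/
noncomputable def hankelDet (α β γ : ℝ) (n : ℕ) (t : ℝ) : ℝ :=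
  Matrix.det (Matrix.of fun j k : Fin n =>
    ∫ x in (0:ℝ)..1, x ^ ((j : ℕ) + (k : ℕ)) * genJacobiWeight α β γ t x)

open Polynomial Matrix Set Metric intervalIntegral

namespace Polynomial

variable {R : Type*} [CommRing R]

theorem degree_sub_C_coeff_mul_lt {p q : R[X]} {n : ℕ} (hp : p.Monic) (hpn : p.natDegree = n)
    (hq : q.degree ≤ n) : (q - C (q.coeff n) * p).degree < n := by
  rw [degree_lt_iff_coeff_zero]
  intro i hi
  rcases hi.eq_or_lt with rfl | hlt
  · simp [coeff_C_mul, ← hpn, hp.coeff_natDegree]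
  · simp [coeff_C_mul, coeff_eq_zero_of_degree_lt (hq.trans_lt (WithBot.coe_lt_coe.2 hlt)),
      coeff_eq_zero_of_natDegree_lt (hpn ▸ hlt)]

theorem coeff_X_mul_derivative (p : R[X]) (n : ℕ) : (X * derivative p).coeff n = n * p.coeff n := by
  cases n with
  | zero => simp
  | succ k => rw [coeff_X_mul, coeff_derivative]; push_cast; ring

section OrthogonalFamily

variable (L : R[X] →ₗ[R] R) {P : ℕ → R[X]} {h : ℕ → R}
  (hP : ∀ n, (P n).Monic ∧ (P n).natDegree = n)
  (horth : ∀ m n, L (P m * P n) = if m = n then h n else 0)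
include hP horth

theorem apply_mul_orthogonal_eq_zero {q : R[X]} {k : ℕ} (hq : q.degree < k) :
    L (q * P k) = 0 := by
  suffices ∀ m ≤ k, ∀ q : R[X], q.degree < m → L (q * P k) = 0 from this k le_rfl q hq
  intro m
  induction m with
  | zero => simp_all [Nat.WithBot.lt_zero_iff]
  | succ m ih =>
    intro hmk q hq
    have hr := degree_sub_C_coeff_mul_lt (hP m).1 (hP m).2 (Order.le_of_lt_succ hq)
    have hsplit : q * P k = (q - C (q.coeff m) * P m) * P k + q.coeff m • (P m * P k) := by
      rw [smul_eq_C_mul]; ring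
    rw [hsplit, map_add, map_smul, ih (by omega) _ hr, horth, if_neg (by omega), smul_zero,
      zero_add]

theorem apply_mul_orthogonal_eq_coeff_mul {q : R[X]} {n : ℕ} (hq : q.degree ≤ n) :
    L (q * P n) = q.coeff n * h n := by
  have hsplit : q * P n = (q - C (q.coeff n) * P n) * P n + q.coeff n • (P n * P n) := by
    rw [smul_eq_C_mul]; ring
  rw [hsplit, map_add, map_smul, apply_mul_orthogonal_eq_zero L hP horth
    (degree_sub_C_coeff_mul_lt (hP n).1 (hP n).2 hq), horth, if_pos rfl, smul_eq_mul, zero_add]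

theorem apply_X_mul_derivative_mul_orthogonal (n : ℕ) :
    L (X * derivative (P n) * P n) = n * h n := by
  have hdeg : (X * derivative (P n)).degree ≤ (n : WithBot ℕ) := by
    refine degree_le_iff_coeff_zero _ _ |>.2 fun m hm => ?_
    rw [coeff_X_mul_derivative, coeff_eq_zero_of_natDegree_lt (by rw [(hP n).2]; exact_mod_cast hm),
      mul_zero]
  have hlead : (P n).coeff n = 1 := by simpa [(hP n).2] using (hP n).1.coeff_natDegree
  rw [apply_mul_orthogonal_eq_coeff_mul L hP horth hdeg, coeff_X_mul_derivative, hlead, mul_one]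

end OrthogonalFamily

noncomputable def coeffMatrix (P : ℕ → R[X]) (n : ℕ) : Matrix (Fin n) (Fin n) R :=
  Matrix.of fun i k => (P k).coeff i

noncomputable def hankelMatrix (L : R[X] →ₗ[R] R) (n : ℕ) : Matrix (Fin n) (Fin n) R :=
  Matrix.of fun j k => L (X ^ ((j : ℕ) + k))

theorem det_coeffMatrix {P : ℕ → R[X]} (hP : ∀ n, (P n).Monic ∧ (P n).natDegree = n) (n : ℕ) :
    (coeffMatrix P n).det = 1 := by
  have htri : (coeffMatrix P n).BlockTriangular id := fun i k hik =>
    coeff_eq_zero_of_natDegree_lt ((hP k).2.trans_lt hik)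
  rw [Matrix.det_of_isUpperTriangular htri]
  refine Finset.prod_eq_one fun i _ => ?_
  simpa [coeffMatrix, (hP i).2] using (hP i).1.coeff_natDegree

theorem coeffMatrix_transpose_mul_hankelMatrix_mul (L : R[X] →ₗ[R] R) {P : ℕ → R[X]} {n : ℕ}
    (hdeg : ∀ j : Fin n, (P j).natDegree < n) :
    (coeffMatrix P n)ᵀ * hankelMatrix L n * coeffMatrix P n =
      Matrix.of fun j k : Fin n => L (P j * P k) := by
  ext j k
  have hexp : ∀ j : Fin n, P j = ∑ i : Fin n, C ((P j).coeff i) * X ^ (i : ℕ) := fun j => by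
    rw [Fin.sum_univ_eq_sum_range (fun i => C ((P j).coeff i) * X ^ i)]
    exact as_sum_range_C_mul_X_pow' _ (hdeg j)
  rw [Matrix.of_apply, hexp j, hexp k, Finset.sum_mul_sum, Matrix.mul_apply, Finset.sum_comm,
    map_sum]
  refine Finset.sum_congr rfl fun i _ => ?_
  rw [Matrix.mul_apply, Finset.sum_mul, map_sum]
  refine Finset.sum_congr rfl fun l _ => ?_
  simp only [coeffMatrix, hankelMatrix, Matrix.transpose_apply, Matrix.of_apply]
  have hmonomial : ∀ (a b : R) (p q : ℕ), C a * X ^ p * (C b * X ^ q) = (a * b) • X ^ (p + q) :=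
    fun a b p q => by rw [smul_eq_C_mul, C_mul, pow_add]; ring
  rw [hmonomial, map_smul, smul_eq_mul, add_comm]
  ring

noncomputable def weightedIntegral {a b : ℝ} {w : ℝ → ℝ} (hw : IntervalIntegrable w volume a b) :
    ℝ[X] →ₗ[ℝ] ℝ where
  toFun q := ∫ x in a..b, q.eval x * w x
  map_add' p q := by
    simp only [eval_add, add_mul]
    exact integral_add (hw.continuousOn_mul p.continuousOn) (hw.continuousOn_mul q.continuousOn)
  map_smul' c q := by simp [mul_assoc, intervalIntegral.integral_const_mul]

@[simp]
theorem weightedIntegral_apply {a b : ℝ} {w : ℝ → ℝ} (hw : IntervalIntegrable w volume a b)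
    (q : ℝ[X]) : weightedIntegral hw q = ∫ x in a..b, q.eval x * w x := rfl

end Polynomial

theorem Equiv.Perm.exists_ne_apply_ne {ι : Type*} [Fintype ι] [DecidableEq ι] {σ : Equiv.Perm ι}
    (hσ : σ ≠ 1) (i : ι) : ∃ j, j ≠ i ∧ σ j ≠ j := by
  obtain ⟨j, hj, hji⟩ := Finset.exists_mem_ne
    (Equiv.Perm.two_le_card_support_of_ne_one hσ) i
  exact ⟨j, hji, Equiv.Perm.mem_support.1 hj⟩

theorem hasDerivAt_mul_mul_apply {𝕜 l m n p : Type*} [NontriviallyNormedField 𝕜] [Fintype m]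
    [Fintype n] (A : Matrix l m 𝕜) (B : Matrix n p 𝕜) {M : 𝕜 → Matrix m n 𝕜} {M' : Matrix m n 𝕜}
    {t : 𝕜} (hM : ∀ i j, HasDerivAt (fun s => M s i j) (M' i j) t) (i : l) (k : p) :
    HasDerivAt (fun s => (A * M s * B) i k) ((A * M' * B) i k) t := by
  simp only [Matrix.mul_apply]
  exact HasDerivAt.fun_sum fun j _ =>
    (HasDerivAt.fun_sum fun l _ => (hM l j).const_mul _).mul_const _

theorem hasDerivAt_det_of_eq_diagonal {𝕜 ι : Type*} [NontriviallyNormedField 𝕜] [Fintype ι]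
    [DecidableEq ι] {G : 𝕜 → Matrix ι ι 𝕜} {G' : Matrix ι ι 𝕜} {d : ι → 𝕜} {t : 𝕜}
    (hG : ∀ i j, HasDerivAt (fun s => G s i j) (G' i j) t) (hGt : G t = diagonal d) :
    HasDerivAt (fun s => (G s).det) (∑ i, G' i i * ∏ j ∈ Finset.univ.erase i, d j) t := by
  simp_rw [det_apply']
  refine (HasDerivAt.fun_sum fun σ _ =>
    (HasDerivAt.fun_finsetProd fun i _ => hG (σ i) i).const_mul _).congr_deriv ?_
  -- At a diagonal point only the identity permutation contributes.
  rw [Finset.sum_eq_single (1 : Equiv.Perm ι)]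
  · simp [hGt, mul_comm]
  · intro σ _ hσ
    refine mul_eq_zero_of_right _ (Finset.sum_eq_zero fun i _ => ?_)
    obtain ⟨j, hji, hσj⟩ := Equiv.Perm.exists_ne_apply_ne hσ i
    rw [Finset.prod_eq_zero (Finset.mem_erase.2 ⟨hji, Finset.mem_univ j⟩)
      (by rw [hGt, diagonal_apply_ne _ hσj]), zero_smul]
  · simp

section GenJacobiWeight

variable {α β γ t x : ℝ}

theorem continuousOn_genJacobiWeight (ht : t < 0) (hα : 0 ≤ α) (hβ : 0 ≤ β) :
    ContinuousOn (genJacobiWeight α β γ t) (uIcc 0 1) := by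
  intro x hx
  rw [uIcc_of_le zero_le_one] at hx
  refine ContinuousAt.continuousWithinAt ?_
  have hxt : x - t ≠ 0 := by linarith [hx.1]
  exact (((continuous_sub_right t).continuousAt.rpow_const (Or.inl hxt)).mul
    (continuousAt_id.rpow_const (Or.inr hα))).mul
    ((continuous_sub_left 1).continuousAt.rpow_const (Or.inr hβ))

theorem intervalIntegrable_genJacobiWeight (ht : t < 0) (hα : 0 ≤ α) (hβ : -1 < β) :
    IntervalIntegrable (genJacobiWeight α β γ t) volume 0 1 := by
  unfold genJacobiWeight
  have hsing : IntervalIntegrable (fun x : ℝ => (1 - x) ^ β) volume 0 1 := by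
    simpa using (intervalIntegrable_rpow' (a := 1) (b := 0) hβ).comp_sub_left 1
  have hreg : ContinuousOn (genJacobiWeight α 0 γ t) (uIcc 0 1) :=
    continuousOn_genJacobiWeight ht hα le_rfl
  simpa [genJacobiWeight] using hsing.continuousOn_mul hreg

theorem mul_genJacobiWeight (hx : 0 ≤ x) (hα : α + 1 ≠ 0) :
    x * genJacobiWeight α β γ t x = genJacobiWeight (α + 1) β γ t x := by
  simp only [genJacobiWeight, rpow_add' hx hα, rpow_one]; ring

theorem one_sub_mul_genJacobiWeight (hx : x ≤ 1) (hβ : β ≠ 0) :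
    (1 - x) * genJacobiWeight α (β - 1) γ t x = genJacobiWeight α β γ t x := by
  have := rpow_add' (sub_nonneg.2 hx) (by simpa using hβ : β - 1 + 1 ≠ 0)
  simp only [sub_add_cancel, rpow_one] at this
  simp only [genJacobiWeight, this]; ring

theorem sub_mul_genJacobiWeight (hxt : t < x) :
    (x - t) * genJacobiWeight α β (γ - 1) t x = genJacobiWeight α β γ t x := by
  have := rpow_add (sub_pos.2 hxt) (γ - 1) 1
  simp only [sub_add_cancel, rpow_one] at this
  simp only [genJacobiWeight, this]; ring

theorem intervalIntegrable_eval_mul_genJacobiWeight (ht : t < 0) (hα : 0 ≤ α) (hβ : -1 < β)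
    (q : ℝ[X]) : IntervalIntegrable (fun x => q.eval x * genJacobiWeight α β γ t x) volume 0 1 :=
  (intervalIntegrable_genJacobiWeight ht hα hβ).continuousOn_mul q.continuousOn

theorem hasDerivAt_genJacobiWeight (hx : x ∈ Ioo 0 1) (hxt : t < x) :
    HasDerivAt (genJacobiWeight α β γ t)
      (γ * genJacobiWeight α β (γ - 1) t x + α * genJacobiWeight (α - 1) β γ t x
        - β * genJacobiWeight α (β - 1) γ t x) x := by
  have h1 := ((hasDerivAt_id x).sub_const t).rpow_const (p := γ) (Or.inl (sub_pos.2 hxt).ne')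
  have h2 := (hasDerivAt_id x).rpow_const (p := α) (Or.inl hx.1.ne')
  have h3 := ((hasDerivAt_id x).const_sub 1).rpow_const (p := β) (Or.inl (sub_pos.2 hx.2).ne')
  refine ((h1.mul h2).mul h3).congr_deriv ?_
  simp only [genJacobiWeight, id, Pi.mul_apply]
  ring

theorem hasDerivAt_genJacobiWeight_param (hxt : t < x) :
    HasDerivAt (fun s => genJacobiWeight α β γ s x) (-γ * genJacobiWeight α β (γ - 1) t x) t := by
  have h := ((hasDerivAt_id t).const_sub x).rpow_const (p := γ) (Or.inl (sub_pos.2 hxt).ne')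
  refine ((h.mul_const (x ^ α)).mul_const ((1 - x) ^ β)).congr_deriv ?_
  simp only [genJacobiWeight, id]
  ring

/-- `∫₀¹ (x w q)' dx = 0`, expanded; the boundary terms vanish because `α + 1 > 0` and `β > 0`. -/
theorem integral_by_parts_genJacobiWeight (ht : t < 0) (hα : 0 ≤ α) (hβ : 0 < β) (q : ℝ[X]) :
    (α + 1) * (∫ x in (0:ℝ)..1, q.eval x * genJacobiWeight α β γ t x)
      - β * (∫ x in (0:ℝ)..1, q.eval x * genJacobiWeight (α + 1) (β - 1) γ t x)
      + γ * (∫ x in (0:ℝ)..1, q.eval x * genJacobiWeight (α + 1) β (γ - 1) t x)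
      + (∫ x in (0:ℝ)..1, (derivative q).eval x * genJacobiWeight (α + 1) β γ t x) = 0 := by
  have hα1 : 0 ≤ α + 1 := by linarith
  have hβ1 : -1 < β - 1 := by linarith
  have i1 := (intervalIntegrable_eval_mul_genJacobiWeight (γ := γ) ht hα (by linarith) q).const_mul
    (α + 1)
  have i2 := (intervalIntegrable_eval_mul_genJacobiWeight (γ := γ) ht hα1 hβ1 q).const_mul β
  have i3 := (intervalIntegrable_eval_mul_genJacobiWeight (γ := γ - 1) ht hα1 (by linarith)
    q).const_mul γ
  have i4 := intervalIntegrable_eval_mul_genJacobiWeight (γ := γ) ht hα1 (by linarith)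
    (derivative q)
  have hF : ∀ x ∈ Ioo (0:ℝ) 1, HasDerivAt (fun x => q.eval x * genJacobiWeight (α + 1) β γ t x)
      ((α + 1) * (q.eval x * genJacobiWeight α β γ t x)
        - β * (q.eval x * genJacobiWeight (α + 1) (β - 1) γ t x)
        + γ * (q.eval x * genJacobiWeight (α + 1) β (γ - 1) t x)
        + (derivative q).eval x * genJacobiWeight (α + 1) β γ t x) x := fun x hx => by
    refine ((q.hasDerivAt x).mul (hasDerivAt_genJacobiWeight (α := α + 1) (β := β) (γ := γ) hx
      (by linarith [hx.1]))).congr_deriv ?_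
    rw [add_sub_cancel_right]
    ring
  have hcont : ContinuousOn (fun x => q.eval x * genJacobiWeight (α + 1) β γ t x) (Icc 0 1) :=
    q.continuousOn.mul (uIcc_of_le (zero_le_one' ℝ) ▸ continuousOn_genJacobiWeight ht hα1 hβ.le)
  have hFTC := integral_eq_sub_of_hasDeriv_right_of_le zero_le_one hcont
    (fun x hx => (hF x hx).hasDerivWithinAt) (((i1.sub i2).add i3).add i4)
  rw [integral_add ((i1.sub i2).add i3) i4, integral_add (i1.sub i2) i3, integral_sub i1 i2,
    intervalIntegral.integral_const_mul, intervalIntegral.integral_const_mul,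
    intervalIntegral.integral_const_mul] at hFTC
  rw [hFTC]
  simp [genJacobiWeight, zero_rpow hβ.ne', zero_rpow (by linarith : α + 1 ≠ 0)]

theorem hasDerivAt_integral_eval_mul_genJacobiWeight (ht : t < 0) (hα : 0 ≤ α) (hβ : 0 ≤ β)
    (q : ℝ[X]) :
    HasDerivAt (fun s => ∫ x in (0:ℝ)..1, q.eval x * genJacobiWeight α β γ s x)
      (∫ x in (0:ℝ)..1, q.eval x * (-γ * genJacobiWeight α β (γ - 1) t x)) t := by
  -- For `s` within `-t/2` of `t` we have `x - s ≥ -t/2 > 0` on `[0, 1]`, so the `s`-derivative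
  -- of the integrand is jointly continuous on a compact set, and its maximum dominates it.
  have hε : 0 < -t / 2 := by linarith
  have hK : IsCompact (Icc (0:ℝ) 1 ×ˢ closedBall t (-t / 2)) :=
    isCompact_Icc.prod (isCompact_closedBall t _)
  have hG : ContinuousOn (fun p : ℝ × ℝ => q.eval p.1 * (-γ * genJacobiWeight α β (γ - 1) p.2 p.1))
      (Icc (0:ℝ) 1 ×ˢ closedBall t (-t / 2)) := by
    rintro ⟨x, s⟩ ⟨⟨hx0, -⟩, hs⟩
    dsimp only at hx0 hs
    rw [mem_closedBall, Real.dist_eq, abs_le] at hs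
    have hxs : x - s ≠ 0 := by linarith
    refine ContinuousAt.continuousWithinAt ?_
    exact (q.continuous.comp continuous_fst).continuousAt.mul (continuousAt_const.mul
      (((continuous_sub.continuousAt.rpow_const (Or.inl hxs)).mul
        (continuousAt_fst.rpow_const (Or.inr hα))).mul
        ((continuous_const.sub continuous_fst).continuousAt.rpow_const (Or.inr hβ))))
  obtain ⟨C, hC⟩ := hK.exists_bound_of_continuousOn hG
  refine (intervalIntegral.hasDerivAt_integral_of_dominated_loc_of_deriv_le (bound := fun _ => C)
    (F := fun s x => q.eval x * genJacobiWeight α β γ s x)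
    (F' := fun s x => q.eval x * (-γ * genJacobiWeight α β (γ - 1) s x))
    (ball_mem_nhds t hε) ?_ ?_ ?_ ?_ intervalIntegrable_const ?_).2
  · filter_upwards [Iio_mem_nhds ht] with s hs
    exact (intervalIntegrable_eval_mul_genJacobiWeight hs hα (by linarith) q)
      |>.aestronglyMeasurable_restrict_uIoc
  · exact intervalIntegrable_eval_mul_genJacobiWeight ht hα (by linarith) q
  · exact ((intervalIntegrable_genJacobiWeight ht hα (by linarith)).const_mul (-γ)
      |>.continuousOn_mul q.continuousOn).aestronglyMeasurable_restrict_uIoc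
  · refine Filter.Eventually.of_forall fun x hx s hs => hC (x, s) ⟨?_, ball_subset_closedBall hs⟩
    rw [uIoc_of_le zero_le_one] at hx
    exact Ioc_subset_Icc_self hx
  · refine Filter.Eventually.of_forall fun x hx s hs => ?_
    rw [uIoc_of_le zero_le_one] at hx
    rw [mem_ball, Real.dist_eq, abs_lt] at hs
    exact (hasDerivAt_genJacobiWeight_param (by linarith [hx.1])).const_mul (q.eval x)

theorem mul_integral_eval_mul_deriv_param_genJacobiWeight (ht : t < 0) (hα : 0 ≤ α) (hβ : 0 < β)
    (q : ℝ[X]) :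
    t * ∫ x in (0:ℝ)..1, q.eval x * (-γ * genJacobiWeight α β (γ - 1) t x)
      = (α + β + γ + 1) * (∫ x in (0:ℝ)..1, q.eval x * genJacobiWeight α β γ t x)
        + (∫ x in (0:ℝ)..1, (X * derivative q).eval x * genJacobiWeight α β γ t x)
        - β * ∫ x in (0:ℝ)..1, q.eval x * genJacobiWeight α (β - 1) γ t x := by
  have hI : ∀ {x : ℝ}, x ∈ uIcc (0:ℝ) 1 → 0 ≤ x ∧ x ≤ 1 := fun hx => by
    rwa [uIcc_of_le zero_le_one] at hx
  have hα1 : α + 1 ≠ 0 := by linarith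
  have iw := intervalIntegrable_eval_mul_genJacobiWeight (γ := γ) ht hα (by linarith) q
  have iβ := intervalIntegrable_eval_mul_genJacobiWeight (β := β - 1) (γ := γ) ht hα (by linarith) q
  have iγ := intervalIntegrable_eval_mul_genJacobiWeight (β := β) (γ := γ - 1) ht hα (by linarith) q
  have hX : ∫ x in (0:ℝ)..1, (derivative q).eval x * genJacobiWeight (α + 1) β γ t x
      = ∫ x in (0:ℝ)..1, (X * derivative q).eval x * genJacobiWeight α β γ t x :=
    integral_congr fun x hx => by
      rw [eval_mul, eval_X, ← mul_genJacobiWeight (hI hx).1 hα1]; ring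
  have hβ1 : ∫ x in (0:ℝ)..1, q.eval x * genJacobiWeight (α + 1) (β - 1) γ t x
      = (∫ x in (0:ℝ)..1, q.eval x * genJacobiWeight α (β - 1) γ t x)
        - ∫ x in (0:ℝ)..1, q.eval x * genJacobiWeight α β γ t x := by
    rw [← integral_sub iβ iw]
    refine integral_congr fun x hx => ?_
    rw [← mul_genJacobiWeight (hI hx).1 hα1, ← one_sub_mul_genJacobiWeight (hI hx).2 hβ.ne']
    ring
  have hγ1 : ∫ x in (0:ℝ)..1, q.eval x * genJacobiWeight (α + 1) β (γ - 1) t x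
      = (∫ x in (0:ℝ)..1, q.eval x * genJacobiWeight α β γ t x)
        + t * ∫ x in (0:ℝ)..1, q.eval x * genJacobiWeight α β (γ - 1) t x := by
    rw [← intervalIntegral.integral_const_mul, ← integral_add iw (iγ.const_mul t)]
    refine integral_congr fun x hx => ?_
    rw [← mul_genJacobiWeight (hI hx).1 hα1,
      ← sub_mul_genJacobiWeight (γ := γ) (by linarith [(hI hx).1])]
    ring
  have hIBP := integral_by_parts_genJacobiWeight (γ := γ) ht hα hβ q
  rw [hX, hβ1, hγ1] at hIBP
  simp only [mul_left_comm _ (-γ), intervalIntegral.integral_const_mul]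
  linear_combination -hIBP

theorem integral_eval_mul_genJacobiWeight_div_one_sub (hβ : β ≠ 0) (q : ℝ[X]) :
    ∫ x in (0:ℝ)..1, q.eval x * genJacobiWeight α β γ t x / (1 - x)
      = ∫ x in (0:ℝ)..1, q.eval x * genJacobiWeight α (β - 1) γ t x := by
  refine intervalIntegral.integral_congr_ae ?_
  filter_upwards [measure_eq_zero_iff_ae_notMem.1 (measure_singleton (μ := volume) (1:ℝ))]
    with x hx1 hx
  rw [uIoc_of_le zero_le_one] at hx
  have h1x : 1 - x ≠ 0 := sub_ne_zero.2 (Ne.symm hx1)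
  rw [← one_sub_mul_genJacobiWeight hx.2 hβ]
  field_simp

end GenJacobiWeight

section HankelDeterminant

variable {α β γ t : ℝ} {P : ℕ → ℝ[X]} {h : ℕ → ℝ}

theorem hasDerivAt_hankelDet (ht : t < 0) (hα : 0 ≤ α) (hβ : 0 ≤ β)
    (hP : ∀ n, (P n).Monic ∧ (P n).natDegree = n)
    (horth : ∀ m n, (∫ x in (0:ℝ)..1, (P m).eval x * (P n).eval x * genJacobiWeight α β γ t x)
      = if m = n then h n else 0) (n : ℕ) :
    HasDerivAt (hankelDet α β γ n)
      (∑ j : Fin n, (∫ x in (0:ℝ)..1, (P j * P j).eval x * (-γ * genJacobiWeight α β (γ - 1) t x))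
        * ∏ k ∈ Finset.univ.erase j, h k) t
    ∧ hankelDet α β γ n t = ∏ k : Fin n, h k := by
  have hw := intervalIntegrable_genJacobiWeight (γ := γ) ht hα (by linarith)
  have hw' := (intervalIntegrable_genJacobiWeight (γ := γ - 1) ht hα (by linarith)).const_mul (-γ)
  have hLorth : ∀ m k, weightedIntegral hw (P m * P k) = if m = k then h k else 0 := by
    simpa only [weightedIntegral_apply, eval_mul] using horth
  set M : ℝ → Matrix (Fin n) (Fin n) ℝ := fun s => Matrix.of fun j k =>
    ∫ x in (0:ℝ)..1, x ^ ((j : ℕ) + (k : ℕ)) * genJacobiWeight α β γ s x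
  set U := coeffMatrix P n
  have hdet : ∀ s, hankelDet α β γ n s = (Uᵀ * M s * U).det := fun s => by
    rw [det_mul, det_mul, det_transpose, det_coeffMatrix hP, one_mul, mul_one]; rfl
  have hdeg : ∀ j : Fin n, (P j).natDegree < n := fun j => ((hP j).2).trans_lt j.isLt
  have hMt : M t = hankelMatrix (weightedIntegral hw) n := by
    ext j k; simp [M, hankelMatrix]
  have hGt : Uᵀ * M t * U = diagonal fun j : Fin n => h j := by
    ext j k
    rw [hMt, coeffMatrix_transpose_mul_hankelMatrix_mul _ hdeg, of_apply, hLorth, diagonal_apply]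
    simp only [Fin.val_inj]
    split_ifs with hjk <;> simp [hjk]
  have hM : ∀ i j, HasDerivAt (fun s => M s i j)
      (hankelMatrix (weightedIntegral hw') n i j) t := fun i j => by
    simpa [M, hankelMatrix] using
      hasDerivAt_integral_eval_mul_genJacobiWeight (γ := γ) ht hα hβ (X ^ ((i : ℕ) + j))
  have hD := hasDerivAt_det_of_eq_diagonal (hasDerivAt_mul_mul_apply Uᵀ U hM) hGt
  rw [coeffMatrix_transpose_mul_hankelMatrix_mul _ hdeg] at hD
  refine ⟨?_, by rw [hdet, hGt, det_diagonal]⟩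
  rw [show hankelDet α β γ n = _ from funext hdet]
  simpa only [of_apply, weightedIntegral_apply] using hD

theorem mul_integral_sq_mul_deriv_param_genJacobiWeight (ht : t < 0) (hα : 0 ≤ α) (hβ : 0 < β)
    (hP : ∀ n, (P n).Monic ∧ (P n).natDegree = n)
    (horth : ∀ m n, (∫ x in (0:ℝ)..1, (P m).eval x * (P n).eval x * genJacobiWeight α β γ t x)
      = if m = n then h n else 0) (n : ℕ) :
    t * (∫ x in (0:ℝ)..1, (P n * P n).eval x * (-γ * genJacobiWeight α β (γ - 1) t x))
      = (α + β + γ + 1 + 2 * n) * h n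
        - β * ∫ y in (0:ℝ)..1, (P n).eval y ^ 2 * genJacobiWeight α β γ t y / (1 - y) := by
  have hw := intervalIntegrable_genJacobiWeight (γ := γ) ht hα (by linarith)
  have hLorth : ∀ m k, weightedIntegral hw (P m * P k) = if m = k then h k else 0 := by
    simpa only [weightedIntegral_apply, eval_mul] using horth
  have hnorm : ∫ x in (0:ℝ)..1, (P n * P n).eval x * genJacobiWeight α β γ t x = h n := by
    rw [← weightedIntegral_apply hw, hLorth, if_pos rfl]
  have hderiv : ∫ x in (0:ℝ)..1, (X * derivative (P n * P n)).eval x * genJacobiWeight α β γ t x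
      = 2 * n * h n := by
    rw [← weightedIntegral_apply hw, show X * derivative (P n * P n)
      = (2:ℝ) • (X * derivative (P n) * P n) by rw [derivative_mul, two_smul]; ring, map_smul,
      apply_X_mul_derivative_mul_orthogonal _ hP hLorth, smul_eq_mul, mul_assoc]
  have hR : ∫ y in (0:ℝ)..1, (P n).eval y ^ 2 * genJacobiWeight α β γ t y / (1 - y)
      = ∫ x in (0:ℝ)..1, (P n * P n).eval x * genJacobiWeight α (β - 1) γ t x := by
    rw [← integral_eval_mul_genJacobiWeight_div_one_sub hβ.ne']
    simp only [eval_mul, sq]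
  rw [mul_integral_eval_mul_deriv_param_genJacobiWeight ht hα hβ, hnorm, hderiv, hR]
  ring

end HankelDeterminant

theorem sum_range_add_two_mul (c : ℝ) (n : ℕ) :
    ∑ j ∈ Finset.range n, (c + 2 * j) = n * (n - 1 + c) := by
  induction n with
  | zero => simp
  | succ n ih => rw [Finset.sum_range_succ, ih]; push_cast; ring

theorem Finset.sum_mul_prod_erase_div_prod {ι K : Type*} [Fintype ι] [DecidableEq ι] [Field K]
    (a d : ι → K) (hd : ∀ i, d i ≠ 0) :
    (∑ i, a i * ∏ j ∈ Finset.univ.erase i, d j) / ∏ i, d i = ∑ i, a i / d i := by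
  rw [Finset.sum_div]
  refine Finset.sum_congr rfl fun i _ => ?_
  rw [← Finset.mul_prod_erase _ d (Finset.mem_univ i)]
  have : ∏ j ∈ Finset.univ.erase i, d j ≠ 0 := Finset.prod_ne_zero_iff.2 fun j _ => hd j
  field_simp [hd i]

theorem statement16
    (α β γ : ℝ) (hα : 0 < α) (hβ : 0 < β)
    (P : ℝ → ℕ → Polynomial ℝ) (h : ℝ → ℕ → ℝ)
    (hmonic : ∀ t < (0:ℝ), ∀ n, (P t n).Monic ∧ (P t n).natDegree = n)
    (hpos : ∀ t < (0:ℝ), ∀ n, 0 < h t n)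
    (horth : ∀ t < (0:ℝ), ∀ m n, (∫ x in (0:ℝ)..1,
        (P t m).eval x * (P t n).eval x * genJacobiWeight α β γ t x)
      = if m = n then h t n else 0)
    (R : ℝ → ℕ → ℝ)
    (hR : ∀ t < (0:ℝ), ∀ n, R t n = β / h t n *
      ∫ y in (0:ℝ)..1, ((P t n).eval y) ^ 2 * genJacobiWeight α β γ t y / (1 - y))
    :
    ∀ n : ℕ, 1 ≤ n → ∀ t < (0:ℝ),
      t * deriv (fun s => Real.log (hankelDet α β γ n s)) t
        = n * (n + α + β + γ) - ∑ j ∈ Finset.range n, R t j := by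
  intro n _ t ht
  obtain ⟨hD, hDt⟩ := hasDerivAt_hankelDet ht hα.le hβ.le (hmonic t ht) (horth t ht) n
  have hh : ∀ k, h t k ≠ 0 := fun k => (hpos t ht k).ne'
  have hterm : ∀ j : ℕ,
      t * ((∫ x in (0:ℝ)..1, (P t j * P t j).eval x * (-γ * genJacobiWeight α β (γ - 1) t x))
        / h t j) = α + β + γ + 1 + 2 * j - R t j := fun j => by
    rw [← mul_div_assoc, mul_integral_sq_mul_deriv_param_genJacobiWeight ht hα.le hβ (hmonic t ht)
      (horth t ht), hR t ht]
    field_simp [hh j]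
  rw [(hD.log (hDt ▸ Finset.prod_ne_zero_iff.2 fun k _ => hh k)).deriv, hDt,
    Finset.sum_mul_prod_erase_div_prod _ (fun k : Fin n => h t k) fun k => hh k, Finset.mul_sum,
    Fin.sum_univ_eq_sum_range (fun j => t * ((∫ x in (0:ℝ)..1,
      (P t j * P t j).eval x * (-γ * genJacobiWeight α β (γ - 1) t x)) / h t j)),
    Finset.sum_congr rfl fun j _ => hterm j, Finset.sum_sub_distrib, sum_range_add_two_mul]
  ring
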